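/- arXiv:2308.06991 — 6 statements merged into one kernel-verified Lean document; each statement's English description precedes it below -/
import Mathlib

section
/- Weak duality for the rational minimax problem: let ξ* = p*/q* with deg p* ≤ n₁, deg q* ≤ n₂ and q*(xⱼ) ≠ 0 for all j, and let η_∞ = max_j |fⱼ − p*(xⱼ)/q*(xⱼ)|. Then for every nonnegative weight vector w ∈ ℝ^m, d₂(w) ≤ η_∞², where d₂(w) is the infimum of Σⱼ wⱼ|fⱼ q(xⱼ) − p(xⱼ)|² over polynomial pairs (p, q) of degrees at most (n₁, n₂) with Σⱼ wⱼ|q(xⱼ)|² = 1. -/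
/-
A feasible pair of `d₂(w)` is obtained by normalising `(p*, q*)` by `(Σ wⱼ|q*(xⱼ)|²)^{-1/2}`;
its objective value is the ratio `Σ wⱼ|fⱼq*(xⱼ) - p*(xⱼ)|² / Σ wⱼ|q*(xⱼ)|²`, which is at most `η²`
because `|fⱼq*(xⱼ) - p*(xⱼ)| ≤ η |q*(xⱼ)|` at every node. If that normalisation is impossible,
all weights vanish, the constraint set of `d₂(w)` is empty and `d₂(w) = 0`.
-/

open Polynomial

/-- The dual objective function `d₂(w)`. -/
noncomputable def d2 {m : ℕ} (n₁ n₂ : ℕ) (x f : Fin m → ℂ) (w : Fin m → ℝ) : ℝ :=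
  sInf {s : ℝ | ∃ p q : Polynomial ℂ, p.natDegree ≤ n₁ ∧ q.natDegree ≤ n₂ ∧
    (∑ j, w j * ‖q.eval (x j)‖ ^ 2) = 1 ∧
    s = ∑ j, w j * ‖f j * q.eval (x j) - p.eval (x j)‖ ^ 2}

section WeightedSums

variable {ι : Type*} [Fintype ι] (w : ι → ℝ)

theorem sum_mul_norm_mul_sq (c : ℂ) (z : ι → ℂ) :
    ∑ j, w j * ‖c * z j‖ ^ 2 = ‖c‖ ^ 2 * ∑ j, w j * ‖z j‖ ^ 2 := by
  rw [Finset.mul_sum]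
  exact Finset.sum_congr rfl fun j _ => by rw [norm_mul, mul_pow]; ring

variable {w}

theorem sum_mul_norm_sq_nonneg (hw : ∀ j, 0 ≤ w j) (z : ι → ℂ) :
    0 ≤ ∑ j, w j * ‖z j‖ ^ 2 :=
  Finset.sum_nonneg fun j _ => mul_nonneg (hw j) (sq_nonneg _)

theorem sum_mul_norm_sq_le_sq_mul (hw : ∀ j, 0 ≤ w j) {a b : ι → ℂ} {η : ℝ}
    (hab : ∀ j, ‖a j‖ ≤ η * ‖b j‖) :
    ∑ j, w j * ‖a j‖ ^ 2 ≤ η ^ 2 * ∑ j, w j * ‖b j‖ ^ 2 := by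
  rw [Finset.mul_sum]
  refine Finset.sum_le_sum fun j _ => ?_
  have hsq : ‖a j‖ ^ 2 ≤ (η * ‖b j‖) ^ 2 := pow_le_pow_left₀ (norm_nonneg _) (hab j) 2
  calc w j * ‖a j‖ ^ 2 ≤ w j * (η * ‖b j‖) ^ 2 := mul_le_mul_of_nonneg_left hsq (hw j)
    _ = η ^ 2 * (w j * ‖b j‖ ^ 2) := by ring

theorem eq_zero_of_sum_mul_norm_sq_eq_zero (hw : ∀ j, 0 ≤ w j) {z : ι → ℂ} (hz : ∀ j, z j ≠ 0)
    (h : ∑ j, w j * ‖z j‖ ^ 2 = 0) : w = 0 := by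
  funext j
  have hj := (Finset.sum_eq_zero_iff_of_nonneg fun i _ => mul_nonneg (hw i) (sq_nonneg ‖z i‖)).mp
    h j (Finset.mem_univ j)
  exact (mul_eq_zero.mp hj).resolve_right (pow_ne_zero 2 (norm_ne_zero_iff.mpr (hz j)))

end WeightedSums

theorem norm_mul_sub_le_of_norm_sub_div_le {f a b : ℂ} {η : ℝ} (hb : b ≠ 0)
    (h : ‖f - a / b‖ ≤ η) : ‖f * b - a‖ ≤ η * ‖b‖ := by
  rw [← div_mul_cancel₀ a hb, ← sub_mul, norm_mul]
  exact mul_le_mul_of_nonneg_right h (norm_nonneg b)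

section DualObjective

variable {m : ℕ} {n₁ n₂ : ℕ} {x f : Fin m → ℂ} {w : Fin m → ℝ}

theorem d2_zero : d2 n₁ n₂ x f 0 = 0 := by
  simp [d2]

theorem d2_le_div (hw : ∀ j, 0 ≤ w j) {p q : Polynomial ℂ} (hp : p.natDegree ≤ n₁)
    (hq : q.natDegree ≤ n₂) (hS : 0 < ∑ j, w j * ‖q.eval (x j)‖ ^ 2) :
    d2 n₁ n₂ x f w ≤ (∑ j, w j * ‖f j * q.eval (x j) - p.eval (x j)‖ ^ 2) /
      ∑ j, w j * ‖q.eval (x j)‖ ^ 2 := by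
  set S := ∑ j, w j * ‖q.eval (x j)‖ ^ 2
  set c : ℂ := Complex.ofReal (Real.sqrt S)⁻¹
  have hc : ‖c‖ ^ 2 = S⁻¹ := by
    rw [Complex.norm_real, Real.norm_eq_abs, sq_abs, inv_pow, Real.sq_sqrt hS.le]
  have hbdd : BddBelow {s : ℝ | ∃ p q : Polynomial ℂ, p.natDegree ≤ n₁ ∧ q.natDegree ≤ n₂ ∧
      (∑ j, w j * ‖q.eval (x j)‖ ^ 2) = 1 ∧
      s = ∑ j, w j * ‖f j * q.eval (x j) - p.eval (x j)‖ ^ 2} := by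
    refine ⟨0, ?_⟩
    rintro s ⟨p', q', -, -, -, rfl⟩
    exact sum_mul_norm_sq_nonneg hw _
  refine csInf_le hbdd ⟨C c * p, C c * q, (natDegree_C_mul_le _ _).trans hp,
    (natDegree_C_mul_le _ _).trans hq, ?_, ?_⟩
  · simp only [eval_mul, eval_C]
    rw [sum_mul_norm_mul_sq, hc, inv_mul_cancel₀ hS.ne']
  · simp only [eval_mul, eval_C, mul_left_comm _ c, ← mul_sub]
    rw [sum_mul_norm_mul_sq, hc, inv_mul_eq_div]

end DualObjective

theorem stmt2_general {m : ℕ} (n₁ n₂ : ℕ) (x : Fin m → ℂ)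
    (f : Fin m → ℂ) (p q : Polynomial ℂ)
    (hp : p.natDegree ≤ n₁) (hq : q.natDegree ≤ n₂)
    (hq0 : ∀ j, q.eval (x j) ≠ 0) (η : ℝ)
    (hub : ∀ j, ‖f j - p.eval (x j) / q.eval (x j)‖ ≤ η)
    (w : Fin m → ℝ) (hw : ∀ j, 0 ≤ w j) :
    d2 n₁ n₂ x f w ≤ η ^ 2 := by
  rcases (sum_mul_norm_sq_nonneg hw fun j => q.eval (x j)).eq_or_lt with hS | hS
  · rw [eq_zero_of_sum_mul_norm_sq_eq_zero hw hq0 hS.symm, d2_zero]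
    exact sq_nonneg η
  · have hfit : ∀ j, ‖f j * q.eval (x j) - p.eval (x j)‖ ≤ η * ‖q.eval (x j)‖ :=
      fun j => norm_mul_sub_le_of_norm_sub_div_le (hq0 j) (hub j)
    calc d2 n₁ n₂ x f w
        ≤ (∑ j, w j * ‖f j * q.eval (x j) - p.eval (x j)‖ ^ 2) /
            ∑ j, w j * ‖q.eval (x j)‖ ^ 2 := d2_le_div hw hp hq hS
      _ ≤ η ^ 2 := div_le_of_le_mul₀ hS.le (sq_nonneg η) (sum_mul_norm_sq_le_sq_mul hw hfit)

/-- Weak duality: `d₂(w) ≤ η∞²` for every nonnegative weight vector `w`. -/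
theorem stmt2 {m : ℕ} (n₁ n₂ : ℕ) (hm : n₁ + n₂ + 2 ≤ m) (x : Fin m → ℂ)
    (hx : Function.Injective x) (f : Fin m → ℂ) (p q : Polynomial ℂ)
    (hp : p.natDegree ≤ n₁) (hq : q.natDegree ≤ n₂)
    (hq0 : ∀ j, q.eval (x j) ≠ 0) (η : ℝ)
    (hub : ∀ j, ‖f j - p.eval (x j) / q.eval (x j)‖ ≤ η)
    (hatt : ∃ j, ‖f j - p.eval (x j) / q.eval (x j)‖ = η)
    (w : Fin m → ℝ) (hw : ∀ j, 0 ≤ w j) :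
    d2 n₁ n₂ x f w ≤ η ^ 2 :=
  stmt2_general n₁ n₂ x f p q hp hq hq0 η hub w hw
end

section
/- Complementary slackness: suppose strong duality holds, i.e., there is w* in the probability simplex with d₂(w*) = η_∞², where η_∞ = max_j |fⱼ − ξ*(xⱼ)| for a minimax rational approximant ξ* = p*/q* with q*(xⱼ) ≠ 0 for all j, and suppose a suitably scaled (p*, q*) attains the infimum defining d₂(w*). Then for every j, wⱼ* · (η_∞ − |fⱼ − ξ*(xⱼ)|) = 0. -/
/-!
After scaling by `τ`, the attained value of `d₂(w)` is the average of the squared pointwise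
errors `‖fⱼ - p(xⱼ)/q(xⱼ)‖ ^ 2 ≤ η ^ 2` against the probability weights `wⱼ ‖τ q(xⱼ)‖ ^ 2`.
Such an average equals `η ^ 2` only if every weight vanishes where the error is below `η`,
and `‖τ q(xⱼ)‖ ≠ 0` transfers this to `wⱼ`.
-/

open Polynomial

theorem mul_sub_eq_zero_of_sum_mul_sq_eq_sq {ι : Type*} [Fintype ι] {a e : ι → ℝ} {η : ℝ}
    (ha : ∀ j, 0 ≤ a j) (he : ∀ j, 0 ≤ e j) (heη : ∀ j, e j ≤ η)
    (ha1 : ∑ j, a j = 1) (hsum : ∑ j, a j * e j ^ 2 = η ^ 2) (j : ι) :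
    a j * (η - e j) = 0 := by
  have hgap : ∑ i, a i * (η ^ 2 - e i ^ 2) = 0 := by
    simp only [mul_sub, Finset.sum_sub_distrib, ← Finset.sum_mul, ha1, one_mul, hsum, sub_self]
  have hterm_nonneg : ∀ i ∈ Finset.univ, 0 ≤ a i * (η ^ 2 - e i ^ 2) := fun i _ =>
    mul_nonneg (ha i) (sub_nonneg.2 (pow_le_pow_left₀ (he i) (heη i) 2))
  have hj := (Finset.sum_eq_zero_iff_of_nonneg hterm_nonneg).1 hgap j (Finset.mem_univ j)
  have hfactored : a j * (η - e j) * (η + e j) = 0 := by rw [← hj]; ring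
  rcases mul_eq_zero.1 hfactored with h | h
  · exact h
  · rw [show η - e j = 0 by linarith [he j, heη j], mul_zero]

theorem norm_mul_sub_eq_norm_mul_norm_sub_div (f u : ℂ) {b : ℂ} (hb : b ≠ 0) (τ : ℂ) :
    ‖f * (τ * b) - τ * u‖ = ‖τ * b‖ * ‖f - u / b‖ := by
  rw [← norm_mul]
  congr 1
  field_simp

theorem stmt3_general {m : ℕ} (n₁ n₂ : ℕ) (x : Fin m → ℂ) (f : Fin m → ℂ) (p q : Polynomial ℂ)
    (hq0 : ∀ j, q.eval (x j) ≠ 0) (η : ℝ)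
    (hub : ∀ j, ‖f j - p.eval (x j) / q.eval (x j)‖ ≤ η)
    (w : Fin m → ℝ) (hw0 : ∀ j, 0 ≤ w j)
    (hsd : d2 n₁ n₂ x f w = η ^ 2)
    (hattain : ∃ τ : ℂ,
      (∑ j, w j * ‖(Polynomial.C τ * q).eval (x j)‖ ^ 2) = 1 ∧
      (∑ j, w j * ‖f j * (Polynomial.C τ * q).eval (x j) -
        (Polynomial.C τ * p).eval (x j)‖ ^ 2) = d2 n₁ n₂ x f w) :
    ∀ j, w j * (η - ‖f j - p.eval (x j) / q.eval (x j)‖) = 0 := by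
  obtain ⟨τ, hnormalized, hoptimal⟩ := hattain
  simp only [eval_mul, eval_C, hsd] at hnormalized hoptimal
  have hτ : τ ≠ 0 := by
    rintro rfl
    simp at hnormalized
  have hweighted : ∑ j, w j * ‖τ * q.eval (x j)‖ ^ 2 *
      ‖f j - p.eval (x j) / q.eval (x j)‖ ^ 2 = η ^ 2 := by
    rw [← hoptimal]
    refine Finset.sum_congr rfl fun j _ => ?_
    rw [norm_mul_sub_eq_norm_mul_norm_sub_div _ _ (hq0 j), mul_pow, mul_assoc]
  intro j
  have hslack := mul_sub_eq_zero_of_sum_mul_sq_eq_sq (fun i => mul_nonneg (hw0 i) (sq_nonneg _))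
    (fun i => norm_nonneg _) hub hnormalized hweighted j
  have hscale : ‖τ * q.eval (x j)‖ ^ 2 ≠ 0 := by simp [hτ, hq0 j]
  rw [mul_right_comm, mul_eq_zero] at hslack
  exact hslack.resolve_right hscale

/-- Complementary slackness: under strong duality `d₂(w*) = η∞²`, with a suitably
scaled `(p*, q*)` attaining the infimum, every `j` satisfies
`wⱼ* (η∞ − |fⱼ − ξ*(xⱼ)|) = 0`. -/
theorem stmt3 {m : ℕ} (n₁ n₂ : ℕ) (hm : n₁ + n₂ + 2 ≤ m) (x : Fin m → ℂ)
    (hx : Function.Injective x) (f : Fin m → ℂ)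
    (p q : Polynomial ℂ) (hp : p.natDegree ≤ n₁) (hq : q.natDegree ≤ n₂)
    (hq0 : ∀ j, q.eval (x j) ≠ 0) (η : ℝ)
    (hub : ∀ j, ‖f j - p.eval (x j) / q.eval (x j)‖ ≤ η)
    (hatt : ∃ j, ‖f j - p.eval (x j) / q.eval (x j)‖ = η)
    (hmin : ∀ p' q' : Polynomial ℂ, p'.natDegree ≤ n₁ → q'.natDegree ≤ n₂ →
      (∀ j, q'.eval (x j) ≠ 0) →
      ∃ j, η ≤ ‖f j - p'.eval (x j) / q'.eval (x j)‖)
    (w : Fin m → ℝ) (hw0 : ∀ j, 0 ≤ w j) (hw1 : ∑ j, w j = 1)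
    (hsd : d2 n₁ n₂ x f w = η ^ 2)
    (hattain : ∃ τ : ℂ,
      (∑ j, w j * ‖(Polynomial.C τ * q).eval (x j)‖ ^ 2) = 1 ∧
      (∑ j, w j * ‖f j * (Polynomial.C τ * q).eval (x j) -
        (Polynomial.C τ * p).eval (x j)‖ ^ 2) = d2 n₁ n₂ x f w) :
    ∀ j, w j * (η - ‖f j - p.eval (x j) / q.eval (x j)‖) = 0 :=
  stmt3_general n₁ n₂ x f p q hq0 η hub w hw0 hsd hattain
end

section
/- Suppose the best rational minimax approximant ξ* = p*/q* (irreducible, non-degenerate, with q*(xⱼ) ≠ 0 for all j) of data (xⱼ, fⱼ), j = 1,…,m, is unique, with error η_∞ = max_j |fⱼ − ξ*(xⱼ)| > 0. Then the infimum η̃ of the linearized problem — minimize η over (η, p, q) with deg p ≤ n₁, 0 ≢ q with deg q ≤ n₂, subject to |fⱼ q(xⱼ) − p(xⱼ)| ≤ η |q(xⱼ)| for all j — equals η_∞, and (η_∞, p*, q*) attains it. -/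
/-!
If `(η', p', q')` with `η' < η` were feasible for the linearized problem, then `p'` vanishes at
every node where `q'` does, so `(p' + δ) / (q' + δ h)` equals `1 / h` at those nodes and tends to
`p' / q'` at the others as `δ → 0`. Since `q'` has at most `deg q'` zeros among the nodes,
Lagrange interpolation gives `h` of degree `≤ n₂` with `1 / h` within `η` of `f` there. For small
`δ` this rational function of type `(n₁, n₂)` has error below `η` at every node, contradicting
the minimality of `η`.
-/

open Polynomial Filter Topology

section

variable {𝕜 : Type*} [NontriviallyNormedField 𝕜]

theorem norm_sub_div_le_iff {f a b : 𝕜} {t : ℝ} (hb : b ≠ 0) :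
    ‖f - a / b‖ ≤ t ↔ ‖f * b - a‖ ≤ t * ‖b‖ := by
  rw [show f - a / b = (f * b - a) / b by field_simp, norm_div,
    div_le_iff₀ (norm_pos_iff.mpr hb)]

theorem exists_ne_zero_norm_sub_lt (z : 𝕜) {r : ℝ} (hr : 0 < r) : ∃ g ≠ 0, ‖z - g‖ < r := by
  by_cases hz : z = 0
  · obtain ⟨g, hg0, hgr⟩ := NormedField.exists_norm_lt 𝕜 hr
    exact ⟨g, norm_pos_iff.mp hg0, by simpa [hz] using hgr⟩
  · exact ⟨z, hz, by simpa using hr⟩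

theorem eventually_norm_sub_add_div_add_mul_lt {f a b : 𝕜} (c : 𝕜) {t : ℝ} (hb : b ≠ 0)
    (h : ‖f - a / b‖ < t) :
    ∀ᶠ δ in 𝓝 (0 : 𝕜), b + δ * c ≠ 0 ∧ ‖f - (a + δ) / (b + δ * c)‖ < t := by
  have hden : Tendsto (fun δ : 𝕜 => b + δ * c) (𝓝 0) (𝓝 b) := by
    simpa using ((continuous_mul_const c).tendsto 0).const_add b
  have hnum : Tendsto (fun δ : 𝕜 => a + δ) (𝓝 0) (𝓝 a) := by
    simpa using (continuous_id.tendsto (0 : 𝕜)).const_add a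
  exact (hden.eventually_ne hb).and <|
    ((hnum.div hden hb).const_sub f).norm.eventually_lt_const h

end

section

variable {ι 𝕜 : Type*} [Fintype ι] [Field 𝕜] {x : ι → 𝕜}

theorem exists_natDegree_le_eval_eq_of_eval_eq_zero (hx : Function.Injective x) {q : 𝕜[X]}
    (hq : q ≠ 0) (w : ι → 𝕜) :
    ∃ h : 𝕜[X], h.natDegree ≤ q.natDegree ∧ ∀ i, q.eval (x i) = 0 → h.eval (x i) = w i := by
  classical
  set S := Finset.univ.filter fun i => q.eval (x i) = 0
  have hS : S.card ≤ q.natDegree := by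
    rw [← Finset.card_image_of_injective S hx]
    refine card_le_degree_of_subset_roots fun y hy => ?_
    obtain ⟨i, hi, rfl⟩ := Finset.mem_image.mp hy
    exact (mem_roots hq).mpr (Finset.mem_filter.mp hi).2
  refine ⟨Lagrange.interpolate S x w, ?_, fun i hi =>
    Lagrange.eval_interpolate_at_node w hx.injOn (by simpa [S] using hi)⟩
  exact natDegree_le_of_degree_le <|
    (Lagrange.degree_interpolate_lt w hx.injOn).le.trans (by exact_mod_cast hS)

end

theorem exists_rat_approx_lt_of_linearized {ι 𝕜 : Type*} [Fintype ι] [NontriviallyNormedField 𝕜]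
    {x : ι → 𝕜} (hx : Function.Injective x) (f : ι → 𝕜) {n₁ n₂ : ℕ} {η η' : ℝ} (hη : 0 < η)
    (hη' : η' < η) {p q : 𝕜[X]} (hq : q ≠ 0) (hp : p.natDegree ≤ n₁) (hqn : q.natDegree ≤ n₂)
    (hlin : ∀ i, ‖f i * q.eval (x i) - p.eval (x i)‖ ≤ η' * ‖q.eval (x i)‖) :
    ∃ P Q : 𝕜[X], P.natDegree ≤ n₁ ∧ Q.natDegree ≤ n₂ ∧
      ∀ i, Q.eval (x i) ≠ 0 ∧ ‖f i - P.eval (x i) / Q.eval (x i)‖ < η := by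
  choose g hg0 hg using fun i => exists_ne_zero_norm_sub_lt (f i) hη
  obtain ⟨h, hdeg, hh⟩ := exists_natDegree_le_eval_eq_of_eval_eq_zero hx hq fun i => (g i)⁻¹
  have hnode : ∀ i, ∀ᶠ δ in 𝓝[≠] (0 : 𝕜), (q + C δ * h).eval (x i) ≠ 0 ∧
      ‖f i - (p + C δ).eval (x i) / (q + C δ * h).eval (x i)‖ < η := by
    intro i
    simp only [eval_add, eval_mul, eval_C]
    by_cases hqi : q.eval (x i) = 0
    · have hpi : p.eval (x i) = 0 := by simpa [hqi] using hlin i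
      filter_upwards [self_mem_nhdsWithin] with δ (hδ : δ ≠ 0)
      rw [hqi, hpi, hh i hqi, zero_add, zero_add, div_mul_cancel_left₀ hδ, inv_inv]
      exact ⟨mul_ne_zero hδ (inv_ne_zero (hg0 i)), hg i⟩
    · exact nhdsWithin_le_nhds <| eventually_norm_sub_add_div_add_mul_lt _ hqi <|
        ((norm_sub_div_le_iff hqi).2 (hlin i)).trans_lt hη'
  obtain ⟨δ, hδ⟩ := (eventually_all.2 hnode).exists
  refine ⟨p + C δ, q + C δ * h, ?_, ?_, hδ⟩
  · exact natDegree_add_le_of_degree_le hp (by simp)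
  · exact natDegree_add_le_of_degree_le hqn ((natDegree_C_mul_le _ _).trans (hdeg.trans hqn))

theorem stmt8_general {m : ℕ} (n₁ n₂ : ℕ) (x : Fin m → ℂ)
    (hx : Function.Injective x) (f : Fin m → ℂ)
    (p q : Polynomial ℂ)
    (hq0 : ∀ j, q.eval (x j) ≠ 0)
    (η : ℝ) (hηpos : 0 < η)
    (hub : ∀ j, ‖f j - p.eval (x j) / q.eval (x j)‖ ≤ η)
    (hmin : ∀ p' q' : Polynomial ℂ, p'.natDegree ≤ n₁ → q'.natDegree ≤ n₂ →
      (∀ j, q'.eval (x j) ≠ 0) →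
      ∃ j, η ≤ ‖f j - p'.eval (x j) / q'.eval (x j)‖) :
    (∀ j, ‖f j * q.eval (x j) - p.eval (x j)‖ ≤
        η * ‖q.eval (x j)‖) ∧
      ∀ (η' : ℝ) (p' q' : Polynomial ℂ), q' ≠ 0 →
        p'.natDegree ≤ n₁ → q'.natDegree ≤ n₂ →
        (∀ j, ‖f j * q'.eval (x j) - p'.eval (x j)‖ ≤
          η' * ‖q'.eval (x j)‖) →
        η ≤ η' := by
  refine ⟨fun j => (norm_sub_div_le_iff (hq0 j)).1 (hub j), ?_⟩
  intro η' p' q' hq' hp' hq'n hlin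
  by_contra! hlt
  obtain ⟨P, Q, hP, hQ, hPQ⟩ :=
    exists_rat_approx_lt_of_linearized hx f hηpos hlt hq' hp' hq'n hlin
  obtain ⟨j, hj⟩ := hmin P Q hP hQ fun j => (hPQ j).1
  exact (hPQ j).2.not_ge hj

/-- Theorem 2.1 (α = 1): under uniqueness, irreducibility and non-degeneracy of the
minimax approximant `ξ* = p/q`, the infimum of the linearized problem equals `η∞`
and is attained at `(η∞, p, q)`. -/
theorem stmt8 {m : ℕ} (n₁ n₂ : ℕ) (hm : n₁ + n₂ + 2 ≤ m) (x : Fin m → ℂ)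
    (hx : Function.Injective x) (f : Fin m → ℂ)
    (p q : Polynomial ℂ) (hp : p.natDegree ≤ n₁) (hq : q.natDegree ≤ n₂)
    (hq0 : ∀ j, q.eval (x j) ≠ 0) (hcop : IsCoprime p q)
    (hnd : p.natDegree = n₁ ∨ q.natDegree = n₂)
    (η : ℝ) (hηpos : 0 < η)
    (hub : ∀ j, ‖f j - p.eval (x j) / q.eval (x j)‖ ≤ η)
    (hatt : ∃ j, ‖f j - p.eval (x j) / q.eval (x j)‖ = η)
    (hmin : ∀ p' q' : Polynomial ℂ, p'.natDegree ≤ n₁ → q'.natDegree ≤ n₂ →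
      (∀ j, q'.eval (x j) ≠ 0) →
      ∃ j, η ≤ ‖f j - p'.eval (x j) / q'.eval (x j)‖)
    (huniq : ∀ p' q' : Polynomial ℂ, p'.natDegree ≤ n₁ → q'.natDegree ≤ n₂ →
      (∀ j, q'.eval (x j) ≠ 0) →
      (∀ j, ‖f j - p'.eval (x j) / q'.eval (x j)‖ ≤ η) →
      p' * q = p * q') :
    (∀ j, ‖f j * q.eval (x j) - p.eval (x j)‖ ≤
        η * ‖q.eval (x j)‖) ∧
      ∀ (η' : ℝ) (p' q' : Polynomial ℂ), q' ≠ 0 →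
        p'.natDegree ≤ n₁ → q'.natDegree ≤ n₂ →
        (∀ j, ‖f j * q'.eval (x j) - p'.eval (x j)‖ ≤
          η' * ‖q'.eval (x j)‖) →
        η ≤ η' :=
  stmt8_general n₁ n₂ x hx f p q hq0 η hηpos hub hmin
end

section
/- If strong duality holds, i.e., max over w in the probability simplex S of d₂(w) equals η_∞², and ξ* = p*/q* is a minimax approximant with reference set X_e(ξ*) = {xⱼ : |fⱼ − ξ*(xⱼ)| = η_∞}, then for any subset X̆ of the nodes containing X_e(ξ*), the restricted dual problem max over w̆ in the simplex over X̆ of d̆₂(w̆) also has optimal value η_∞², where d̆₂ is defined as d₂ but with the sums restricted to nodes in X̆. -/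
/-!
Weak duality bounds `d2S` on any node set by `η ^ 2`: normalising `q` to be feasible, the
weighted residual `∑ w |f q - p|²` is at most `η ^ 2 ∑ w |q|²` because `|f - p / q| ≤ η`.
An optimal weight of the full problem vanishes off the reference set, hence off `T`, so
restricting it to `T` changes neither its constraint nor its objective, and it attains
`η ^ 2` for the restricted problem.
-/

open Polynomial

/-- The dual objective function restricted to nodes in a subset `T`. -/
noncomputable def d2S {m : ℕ} (n₁ n₂ : ℕ) (x f : Fin m → ℂ) (T : Finset (Fin m))
    (w : Fin m → ℝ) : ℝ :=
  sInf {s : ℝ | ∃ p q : Polynomial ℂ, p.natDegree ≤ n₁ ∧ q.natDegree ≤ n₂ ∧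
    (∑ j ∈ T, w j * ‖q.eval (x j)‖ ^ 2) = 1 ∧
    s = ∑ j ∈ T, w j * ‖f j * q.eval (x j) - p.eval (x j)‖ ^ 2}

section DualObjective

variable {m : ℕ} (n₁ n₂ : ℕ) (x f : Fin m → ℂ)

lemma sum_mul_norm_const_mul_sq {ι : Type*} (s : Finset ι) (w : ι → ℝ) (c : ℂ) (g : ι → ℂ) :
    ∑ j ∈ s, w j * ‖c * g j‖ ^ 2 = ‖c‖ ^ 2 * ∑ j ∈ s, w j * ‖g j‖ ^ 2 := by
  rw [Finset.mul_sum]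
  refine Finset.sum_congr rfl fun j _ => ?_
  rw [norm_mul, mul_pow]
  ring

lemma d2S_le_div {T : Finset (Fin m)} {w : Fin m → ℝ} (hw : ∀ j ∈ T, 0 ≤ w j)
    {p q : ℂ[X]} (hp : p.natDegree ≤ n₁) (hq : q.natDegree ≤ n₂)
    (hS : 0 < ∑ j ∈ T, w j * ‖q.eval (x j)‖ ^ 2) :
    d2S n₁ n₂ x f T w ≤ (∑ j ∈ T, w j * ‖f j * q.eval (x j) - p.eval (x j)‖ ^ 2) /
      ∑ j ∈ T, w j * ‖q.eval (x j)‖ ^ 2 := by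
  set S := ∑ j ∈ T, w j * ‖q.eval (x j)‖ ^ 2
  set c : ℂ := ↑(Real.sqrt S)⁻¹
  have hc : c ≠ 0 := by simp [c, (Real.sqrt_pos.2 hS).ne']
  have hc2 : ‖c‖ ^ 2 = S⁻¹ := by
    rw [Complex.norm_real, Real.norm_eq_abs, sq_abs, inv_pow, Real.sq_sqrt hS.le]
  have hbdd : BddBelow {s : ℝ | ∃ p q : ℂ[X], p.natDegree ≤ n₁ ∧ q.natDegree ≤ n₂ ∧
      (∑ j ∈ T, w j * ‖q.eval (x j)‖ ^ 2) = 1 ∧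
      s = ∑ j ∈ T, w j * ‖f j * q.eval (x j) - p.eval (x j)‖ ^ 2} := by
    refine ⟨0, ?_⟩
    rintro s ⟨-, -, -, -, -, rfl⟩
    exact Finset.sum_nonneg fun j hj => mul_nonneg (hw j hj) (sq_nonneg _)
  refine (csInf_le hbdd ⟨C c * p, C c * q, ?_, ?_, ?_, rfl⟩).trans_eq ?_
  · rwa [natDegree_C_mul hc]
  · rwa [natDegree_C_mul hc]
  · simp only [eval_mul, eval_C]
    rw [sum_mul_norm_const_mul_sq, hc2, inv_mul_cancel₀ hS.ne']
  · have hres : ∀ j, f j * (C c * q).eval (x j) - (C c * p).eval (x j) =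
        c * (f j * q.eval (x j) - p.eval (x j)) := fun j => by
      simp only [eval_mul, eval_C]; ring
    simp only [hres, sum_mul_norm_const_mul_sq, hc2, div_eq_inv_mul]

lemma sum_mul_norm_residual_sq_le {T : Finset (Fin m)} {w : Fin m → ℝ}
    (hw : ∀ j ∈ T, 0 ≤ w j) {p q : ℂ[X]} (hq0 : ∀ j ∈ T, q.eval (x j) ≠ 0) {η : ℝ}
    (hub : ∀ j ∈ T, ‖f j - p.eval (x j) / q.eval (x j)‖ ≤ η) :
    ∑ j ∈ T, w j * ‖f j * q.eval (x j) - p.eval (x j)‖ ^ 2 ≤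
      η ^ 2 * ∑ j ∈ T, w j * ‖q.eval (x j)‖ ^ 2 := by
  rw [Finset.mul_sum]
  refine Finset.sum_le_sum fun j hj => ?_
  have hfactor : f j * q.eval (x j) - p.eval (x j) =
      q.eval (x j) * (f j - p.eval (x j) / q.eval (x j)) := by
    field_simp [hq0 j hj]
  have herr := pow_le_pow_left₀ (norm_nonneg _) (hub j hj) 2
  rw [hfactor, norm_mul, mul_pow]
  linarith [mul_le_mul_of_nonneg_left herr (mul_nonneg (hw j hj) (sq_nonneg ‖q.eval (x j)‖))]

/-- Weak duality. -/
lemma d2S_le_sq {T : Finset (Fin m)} {w : Fin m → ℝ} (hw : ∀ j ∈ T, 0 ≤ w j)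
    (hw1 : ∑ j ∈ T, w j = 1) {p q : ℂ[X]} (hp : p.natDegree ≤ n₁) (hq : q.natDegree ≤ n₂)
    (hq0 : ∀ j ∈ T, q.eval (x j) ≠ 0) {η : ℝ}
    (hub : ∀ j ∈ T, ‖f j - p.eval (x j) / q.eval (x j)‖ ≤ η) :
    d2S n₁ n₂ x f T w ≤ η ^ 2 := by
  have hS : 0 < ∑ j ∈ T, w j * ‖q.eval (x j)‖ ^ 2 := by
    obtain ⟨j, hjT, hwj⟩ := Finset.exists_ne_zero_of_sum_ne_zero (hw1.symm ▸ one_ne_zero)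
    exact Finset.sum_pos' (fun j hj => mul_nonneg (hw j hj) (sq_nonneg _))
      ⟨j, hjT, mul_pos ((hw j hjT).lt_of_ne' hwj) (pow_pos (norm_pos_iff.2 (hq0 j hjT)) 2)⟩
  calc d2S n₁ n₂ x f T w
      ≤ (∑ j ∈ T, w j * ‖f j * q.eval (x j) - p.eval (x j)‖ ^ 2) /
          ∑ j ∈ T, w j * ‖q.eval (x j)‖ ^ 2 := d2S_le_div n₁ n₂ x f hw hp hq hS
    _ ≤ η ^ 2 := (div_le_iff₀ hS).2 (sum_mul_norm_residual_sq_le x f hw hq0 hub)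

lemma d2S_eq_of_eq_zero_of_notMem {T U : Finset (Fin m)} (hTU : T ⊆ U) {w : Fin m → ℝ}
    (hw : ∀ j ∈ U, j ∉ T → w j = 0) :
    d2S n₁ n₂ x f T w = d2S n₁ n₂ x f U w := by
  have hsum : ∀ g : Fin m → ℝ, ∑ j ∈ T, w j * g j = ∑ j ∈ U, w j * g j := fun g =>
    Finset.sum_subset hTU fun j hjU hjT => by rw [hw j hjU hjT, zero_mul]
  simp only [d2S, hsum]

end DualObjective

theorem stmt10_general {m : ℕ} (n₁ n₂ : ℕ) (x : Fin m → ℂ)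
    (f : Fin m → ℂ)
    (p q : Polynomial ℂ) (hp : p.natDegree ≤ n₁) (hq : q.natDegree ≤ n₂)
    (hq0 : ∀ j, q.eval (x j) ≠ 0) (η : ℝ)
    (hub : ∀ j, ‖f j - p.eval (x j) / q.eval (x j)‖ ≤ η)
    (hmax : ∃ w : Fin m → ℝ, (∀ j, 0 ≤ w j) ∧ (∑ j, w j = 1) ∧
      d2S n₁ n₂ x f Finset.univ w = η ^ 2)
    (hcs : ∀ w : Fin m → ℝ, (∀ j, 0 ≤ w j) → (∑ j, w j = 1) →
      d2S n₁ n₂ x f Finset.univ w = η ^ 2 →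
      ∀ j, ‖f j - p.eval (x j) / q.eval (x j)‖ ≠ η → w j = 0)
    (T : Finset (Fin m))
    (hT : ∀ j, ‖f j - p.eval (x j) / q.eval (x j)‖ = η → j ∈ T) :
    sSup ((d2S n₁ n₂ x f T) '' {w | (∀ j, 0 ≤ w j) ∧ ∑ j ∈ T, w j = 1}) = η ^ 2 := by
  obtain ⟨w, hw0, hw1, hwval⟩ := hmax
  have hzero : ∀ j ∈ Finset.univ, j ∉ T → w j = 0 := fun j _ hj =>
    hcs w hw0 hw1 hwval j fun h => hj (hT j h)
  have hw1T : ∑ j ∈ T, w j = 1 :=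
    (Finset.sum_subset T.subset_univ hzero).trans hw1
  have hwT : d2S n₁ n₂ x f T w = η ^ 2 :=
    (d2S_eq_of_eq_zero_of_notMem n₁ n₂ x f T.subset_univ hzero).trans hwval
  refine IsGreatest.csSup_eq ⟨⟨w, ⟨hw0, hw1T⟩, hwT⟩, ?_⟩
  rintro _ ⟨v, ⟨hv0, hv1⟩, rfl⟩
  exact d2S_le_sq n₁ n₂ x f (fun j _ => hv0 j) hv1 hp hq (fun j _ => hq0 j) fun j _ => hub j

/-- Filtering out non-reference points: if strong duality holds for the full dual
problem, it holds for the dual problem restricted to any node subset `T` containing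
the reference set of `ξ* = p/q`. -/
theorem stmt10 {m : ℕ} (n₁ n₂ : ℕ) (hm : n₁ + n₂ + 2 ≤ m) (x : Fin m → ℂ)
    (hx : Function.Injective x) (f : Fin m → ℂ)
    (p q : Polynomial ℂ) (hp : p.natDegree ≤ n₁) (hq : q.natDegree ≤ n₂)
    (hq0 : ∀ j, q.eval (x j) ≠ 0) (hcop : IsCoprime p q) (η : ℝ)
    (hub : ∀ j, ‖f j - p.eval (x j) / q.eval (x j)‖ ≤ η)
    (hatt : ∃ j, ‖f j - p.eval (x j) / q.eval (x j)‖ = η)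
    (hmin : ∀ p' q' : Polynomial ℂ, p'.natDegree ≤ n₁ → q'.natDegree ≤ n₂ →
      (∀ j, q'.eval (x j) ≠ 0) →
      ∃ j, η ≤ ‖f j - p'.eval (x j) / q'.eval (x j)‖)
    (hsd : sSup ((d2S n₁ n₂ x f Finset.univ) ''
        {w | (∀ j, 0 ≤ w j) ∧ ∑ j, w j = 1}) = η ^ 2)
    (hmax : ∃ w : Fin m → ℝ, (∀ j, 0 ≤ w j) ∧ (∑ j, w j = 1) ∧
      d2S n₁ n₂ x f Finset.univ w = η ^ 2)
    (hcs : ∀ w : Fin m → ℝ, (∀ j, 0 ≤ w j) → (∑ j, w j = 1) →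
      d2S n₁ n₂ x f Finset.univ w = η ^ 2 →
      ∀ j, ‖f j - p.eval (x j) / q.eval (x j)‖ ≠ η → w j = 0)
    (T : Finset (Fin m))
    (hT : ∀ j, ‖f j - p.eval (x j) / q.eval (x j)‖ = η → j ∈ T) :
    sSup ((d2S n₁ n₂ x f T) '' {w | (∀ j, 0 ≤ w j) ∧ ∑ j ∈ T, w j = 1}) = η ^ 2 :=
  stmt10_general n₁ n₂ x f p q hp hq hq0 η hub hmax hcs T hT
end

section
/- Ruttan implies strong duality: suppose there exist points z₁,…,z_t among the nodes belonging to the reference set of an irreducible approximant ξ̂ = p̂/q̂ (that is, |f(zⱼ) − ξ̂(zⱼ)| = e(ξ̂) for each j) and positive reals ϖ₁,…,ϖ_t with Σϖⱼ = 1 such that H = Σⱼ ϖⱼ H(zⱼ) ⪰ 0, where H(z) is the Ruttan matrix built with e = e(ξ̂). Define w* ∈ ℝ^m by wⱼ* = ϖⱼ at the chosen nodes and 0 elsewhere. Then e(ξ̂)² is the smallest value of c^H A_{w*} c over c with c^H B_{w*} c = 1, where A_{w*} and B_{w*} are the weighted quadratic forms (A_{w*} = Σⱼ wⱼ* times the stacked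 residual form), and the coefficient vector ĉ of (p̂, q̂) attains it after normalization. -/
open Polynomial

/-- Ruttan implies strong duality direction: if the weights `w` are supported on
reference points of the irreducible approximant `ξ̂ = p̂/q̂` and the Ruttan matrix
`Σⱼ wⱼ H(xⱼ) = A_w − e² B_w` is positive semidefinite (stated as nonnegativity of
the corresponding quadratic form), then `e²` is the minimum of the quadratic form
`c^H A_w c` under the normalization `c^H B_w c = 1`, attained by a suitable scaling
of the coefficient vector of `(p̂, q̂)`. -/
theorem stmt13 {m : ℕ} (n₁ n₂ : ℕ) (hm : n₁ + n₂ + 2 ≤ m) (x : Fin m → ℂ)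
    (hx : Function.Injective x) (f : Fin m → ℂ)
    (phat qhat : Polynomial ℂ) (hp : phat.natDegree ≤ n₁) (hq : qhat.natDegree ≤ n₂)
    (hcop : IsCoprime phat qhat) (hq0 : ∀ j, qhat.eval (x j) ≠ 0) (e : ℝ)
    (hub : ∀ j, ‖f j - phat.eval (x j) / qhat.eval (x j)‖ ≤ e)
    (hatt : ∃ j, ‖f j - phat.eval (x j) / qhat.eval (x j)‖ = e)
    (w : Fin m → ℝ) (hw0 : ∀ j, 0 ≤ w j) (hw1 : ∑ j, w j = 1)
    (hsupp : ∀ j, 0 < w j →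
      ‖f j - phat.eval (x j) / qhat.eval (x j)‖ = e)
    (hpsd : ∀ p q : Polynomial ℂ, p.natDegree ≤ n₁ → q.natDegree ≤ n₂ →
      0 ≤ (∑ j, w j * ‖f j * q.eval (x j) - p.eval (x j)‖ ^ 2) -
        e ^ 2 * ∑ j, w j * ‖q.eval (x j)‖ ^ 2) :
    (∀ p q : Polynomial ℂ, p.natDegree ≤ n₁ → q.natDegree ≤ n₂ →
      (∑ j, w j * ‖q.eval (x j)‖ ^ 2) = 1 →
      e ^ 2 ≤ ∑ j, w j * ‖f j * q.eval (x j) - p.eval (x j)‖ ^ 2) ∧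
    ∃ τ : ℂ,
      (∑ j, w j * ‖(Polynomial.C τ * qhat).eval (x j)‖ ^ 2) = 1 ∧
      (∑ j, w j * ‖f j * (Polynomial.C τ * qhat).eval (x j) -
        (Polynomial.C τ * phat).eval (x j)‖ ^ 2) = e ^ 2 := by
  constructor
  · intro p q hp' hq' hB
    have h := hpsd p q hp' hq'
    rw [hB] at h
    linarith
  · set S := ∑ j, w j * ‖qhat.eval (x j)‖ ^ 2 with hS
    have hS0 : 0 < S := by
      obtain ⟨j, hj⟩ : ∃ j, 0 < w j := by
        by_contra h
        push_neg at h
        have : (∑ j, w j) ≤ 0 := Finset.sum_nonpos (fun j _ => h j)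
        linarith
      refine Finset.sum_pos' (fun i _ => mul_nonneg (hw0 i) (by positivity)) ⟨j, Finset.mem_univ j, ?_⟩
      exact mul_pos hj (pow_pos (norm_pos_iff.mpr (hq0 j)) 2)
    set t : ℝ := (Real.sqrt S)⁻¹ with ht
    have ht0 : 0 ≤ t := by positivity
    have ht2 : t ^ 2 = S⁻¹ := by
      rw [ht, inv_pow, Real.sq_sqrt hS0.le]
    refine ⟨(t : ℂ), ?_, ?_⟩
    · have habs : ∀ j, ‖(Polynomial.C (t : ℂ) * qhat).eval (x j)‖ ^ 2
          = S⁻¹ * ‖qhat.eval (x j)‖ ^ 2 := by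
        intro j
        rw [Polynomial.eval_mul, Polynomial.eval_C, norm_mul, mul_pow,
          Complex.norm_real, Real.norm_of_nonneg ht0, ht2]
      simp only [habs]
      have : ∑ j, w j * (S⁻¹ * ‖qhat.eval (x j)‖ ^ 2)
          = S⁻¹ * ∑ j, w j * ‖qhat.eval (x j)‖ ^ 2 := by
        rw [Finset.mul_sum]; congr 1; ext j; ring
      rw [this, ← hS, inv_mul_cancel₀ hS0.ne']
    · have hterm : ∀ j, w j * ‖f j * ((Polynomial.C (t : ℂ) * qhat).eval (x j))
            - (Polynomial.C (t : ℂ) * phat).eval (x j)‖ ^ 2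
          = e ^ 2 * S⁻¹ * (w j * ‖qhat.eval (x j)‖ ^ 2) := by
        intro j
        rcases eq_or_lt_of_le (hw0 j) with h0 | h0
        · rw [← h0]; ring
        · have hres : ‖f j * qhat.eval (x j) - phat.eval (x j)‖
              = e * ‖qhat.eval (x j)‖ := by
            have h1 := hsupp j h0
            have hq' := hq0 j
            have hd : f j - phat.eval (x j) / qhat.eval (x j)
                = (f j * qhat.eval (x j) - phat.eval (x j)) / qhat.eval (x j) := by
              field_simp
            have hb : ‖qhat.eval (x j)‖ ≠ 0 := norm_ne_zero_iff.mpr hq'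
            rw [hd, norm_div, div_eq_iff hb] at h1
            exact h1
          have hfact : f j * ((Polynomial.C (t : ℂ) * qhat).eval (x j))
              - (Polynomial.C (t : ℂ) * phat).eval (x j)
              = (t : ℂ) * (f j * qhat.eval (x j) - phat.eval (x j)) := by
            simp [Polynomial.eval_mul]; ring
          rw [hfact, norm_mul, mul_pow, Complex.norm_real,
            Real.norm_of_nonneg ht0, ht2, hres, mul_pow]
          ring
      simp only [hterm]
      rw [← Finset.mul_sum, ← hS]
      field_simp
end

section
/- Strong duality implies Ruttan direction: let w* ∈ ℝ^m, w* ≥ 0, Σⱼ wⱼ* = 1, and suppose d₂(w*) = η_∞² where η_∞ = e(ξ*) for an irreducible minimax approximant ξ* = p*/q* with q*(xⱼ) ≠ 0 for all j, and the infimum defining d₂(w*) is attained. Then the Hermitian matrix H_{w*} = A_{w*} − η_∞² B_{w*} = Σⱼ wⱼ* H(xⱼ) is positive semidefinite, and wⱼ* = 0 for every node xⱼ not in the reference set X_e(ξ*); hence H_{w*} = Σ over reference nodes of wⱼ* H(xⱼ), so Ruttan's sufficient condition holds. -/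
open Polynomial

/-!
Writing `c = (p, q)`, the two quadratic forms `c ↦ cᴴ A_w c` and `c ↦ cᴴ B_w c` are homogeneous
of degree two, so the constrained minimum `d₂(w) = η²` gives `cᴴ A_w c ≥ η² cᴴ B_w c` for every
`c`, i.e. `H_w ⪰ 0`. Evaluated at the minimax pair `(p*, q*)`, every term of `cᴴ H_w c` is
`wⱼ (|fⱼ - ξ*(xⱼ)|² - η²) |q*(xⱼ)|² ≤ 0` while the sum is `≥ 0`; so each term vanishes, which
forces `wⱼ = 0` wherever the error of `ξ*` stays below `η` (complementary slackness).
-/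

lemma Finset.weight_eq_zero_of_sum_mul_le {ι : Type*} [Fintype ι] {w a b : ι → ℝ}
    (hw : ∀ i, 0 ≤ w i) (hab : ∀ i, a i ≤ b i) (hsum : ∑ i, w i * b i ≤ ∑ i, w i * a i)
    {j : ι} (hj : a j < b j) : w j = 0 := by
  by_contra hwj
  have hlt : ∑ i, w i * a i < ∑ i, w i * b i :=
    Finset.sum_lt_sum (fun i _ => mul_le_mul_of_nonneg_left (hab i) (hw i))
      ⟨j, Finset.mem_univ j, mul_lt_mul_of_pos_left hj ((hw j).lt_of_ne' hwj)⟩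
  linarith

namespace LinearizedMinimax

variable {m : ℕ} (x f : Fin m → ℂ) (w : Fin m → ℝ)

/-- `cᴴ A_w c` for `c = (p, q)`. -/
noncomputable def formA (p q : ℂ[X]) : ℝ :=
  ∑ j, w j * ‖f j * q.eval (x j) - p.eval (x j)‖ ^ 2

/-- `cᴴ B_w c` for `c = (p, q)`. -/
noncomputable def formB (q : ℂ[X]) : ℝ :=
  ∑ j, w j * ‖q.eval (x j)‖ ^ 2

variable {x f w}

lemma formA_nonneg (hw : ∀ j, 0 ≤ w j) (p q : ℂ[X]) : 0 ≤ formA x f w p q :=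
  Finset.sum_nonneg fun j _ => mul_nonneg (hw j) (by positivity)

lemma formB_nonneg (hw : ∀ j, 0 ≤ w j) (q : ℂ[X]) : 0 ≤ formB x w q :=
  Finset.sum_nonneg fun j _ => mul_nonneg (hw j) (by positivity)

lemma formA_C_mul (a : ℂ) (p q : ℂ[X]) :
    formA x f w (C a * p) (C a * q) = ‖a‖ ^ 2 * formA x f w p q := by
  simp only [formA, Finset.mul_sum, eval_mul, eval_C]
  refine Finset.sum_congr rfl fun j _ => ?_
  rw [show f j * (a * q.eval (x j)) - a * p.eval (x j) =
    a * (f j * q.eval (x j) - p.eval (x j)) by ring, norm_mul, mul_pow]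
  ring

lemma formB_C_mul (a : ℂ) (q : ℂ[X]) : formB x w (C a * q) = ‖a‖ ^ 2 * formB x w q := by
  simp only [formB, Finset.mul_sum, eval_mul, eval_C, norm_mul, mul_pow]
  exact Finset.sum_congr rfl fun j _ => by ring

lemma d2_le_formA {n₁ n₂ : ℕ} (hw : ∀ j, 0 ≤ w j) {p q : ℂ[X]} (hp : p.natDegree ≤ n₁)
    (hq : q.natDegree ≤ n₂) (hB : formB x w q = 1) : d2 n₁ n₂ x f w ≤ formA x f w p q :=
  csInf_le ⟨0, by rintro s ⟨p, q, -, -, -, rfl⟩; exact formA_nonneg hw p q⟩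
    ⟨p, q, hp, hq, hB, rfl⟩

lemma d2_mul_formB_le_formA {n₁ n₂ : ℕ} (hw : ∀ j, 0 ≤ w j) {p q : ℂ[X]}
    (hp : p.natDegree ≤ n₁) (hq : q.natDegree ≤ n₂) :
    d2 n₁ n₂ x f w * formB x w q ≤ formA x f w p q := by
  rcases (formB_nonneg hw q).eq_or_lt with hB | hB
  · rw [← hB, mul_zero]
    exact formA_nonneg hw p q
  set a : ℂ := ((√(formB x w q) : ℝ) : ℂ)⁻¹
  have ha : ‖a‖ ^ 2 = (formB x w q)⁻¹ := by
    rw [norm_inv, Complex.norm_real, Real.norm_of_nonneg (Real.sqrt_nonneg _), inv_pow,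
      Real.sq_sqrt hB.le]
  have hle : d2 n₁ n₂ x f w ≤ (formB x w q)⁻¹ * formA x f w p q := by
    rw [← ha, ← formA_C_mul]
    refine d2_le_formA hw ((natDegree_C_mul_le a p).trans hp)
      ((natDegree_C_mul_le a q).trans hq) ?_
    rw [formB_C_mul, ha, inv_mul_cancel₀ hB.ne']
  rwa [le_inv_mul_iff₀ hB, mul_comm] at hle

end LinearizedMinimax

open LinearizedMinimax in
theorem stmt14_general {m : ℕ} (n₁ n₂ : ℕ) (x : Fin m → ℂ)
    (f : Fin m → ℂ)
    (pstar qstar : Polynomial ℂ) (hp : pstar.natDegree ≤ n₁)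
    (hq : qstar.natDegree ≤ n₂) (hq0 : ∀ j, qstar.eval (x j) ≠ 0)
    (η : ℝ)
    (hub : ∀ j, ‖f j - pstar.eval (x j) / qstar.eval (x j)‖ ≤ η)
    (w : Fin m → ℝ) (hw0 : ∀ j, 0 ≤ w j)
    (hsd : d2 n₁ n₂ x f w = η ^ 2) :
    (∀ p q : Polynomial ℂ, p.natDegree ≤ n₁ → q.natDegree ≤ n₂ →
      0 ≤ (∑ j, w j * ‖f j * q.eval (x j) - p.eval (x j)‖ ^ 2) -
        η ^ 2 * ∑ j, w j * ‖q.eval (x j)‖ ^ 2) ∧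
    ∀ j, ‖f j - pstar.eval (x j) / qstar.eval (x j)‖ ≠ η → w j = 0 := by
  have hpsd : ∀ p q : ℂ[X], p.natDegree ≤ n₁ → q.natDegree ≤ n₂ →
      η ^ 2 * formB x w q ≤ formA x f w p q := fun p q hp hq =>
    hsd ▸ d2_mul_formB_le_formA hw0 hp hq
  refine ⟨fun p q hp hq => sub_nonneg.2 (hpsd p q hp hq), fun j hj => ?_⟩
  have hterm : ∀ i, ‖f i * qstar.eval (x i) - pstar.eval (x i)‖ ^ 2 =
      ‖f i - pstar.eval (x i) / qstar.eval (x i)‖ ^ 2 * ‖qstar.eval (x i)‖ ^ 2 := fun i => by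
    rw [← mul_pow, ← norm_mul, sub_mul, div_mul_cancel₀ _ (hq0 i)]
  refine Finset.weight_eq_zero_of_sum_mul_le hw0
    (a := fun i => ‖f i * qstar.eval (x i) - pstar.eval (x i)‖ ^ 2)
    (b := fun i => η ^ 2 * ‖qstar.eval (x i)‖ ^ 2) (fun i => ?_) ?_ ?_
  · rw [hterm]
    gcongr
    exact hub i
  · simpa only [formA, formB, Finset.mul_sum, mul_left_comm] using hpsd pstar qstar hp hq
  · rw [hterm]
    have := norm_pos_iff.2 (hq0 j)
    gcongr
    exact (hub j).lt_of_ne hj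

/-- Strong duality implies Ruttan direction: if `d₂(w*) = η∞²` is attained, then
`H_{w*} = A_{w*} − η∞² B_{w*}` is positive semidefinite (stated as nonnegativity of
the quadratic form `Σⱼ wⱼ*|fⱼq(xⱼ)−p(xⱼ)|² − η∞² Σⱼ wⱼ*|q(xⱼ)|²`) and the weights
vanish off the reference set of `ξ* = p*/q*`, so Ruttan's condition holds. -/
theorem stmt14 {m : ℕ} (n₁ n₂ : ℕ) (hm : n₁ + n₂ + 2 ≤ m) (x : Fin m → ℂ)
    (hx : Function.Injective x) (f : Fin m → ℂ)
    (pstar qstar : Polynomial ℂ) (hp : pstar.natDegree ≤ n₁)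
    (hq : qstar.natDegree ≤ n₂) (hq0 : ∀ j, qstar.eval (x j) ≠ 0)
    (hcop : IsCoprime pstar qstar) (η : ℝ)
    (hub : ∀ j, ‖f j - pstar.eval (x j) / qstar.eval (x j)‖ ≤ η)
    (hatt : ∃ j, ‖f j - pstar.eval (x j) / qstar.eval (x j)‖ = η)
    (hmin : ∀ p' q' : Polynomial ℂ, p'.natDegree ≤ n₁ → q'.natDegree ≤ n₂ →
      (∀ j, q'.eval (x j) ≠ 0) →
      ∃ j, η ≤ ‖f j - p'.eval (x j) / q'.eval (x j)‖)
    (w : Fin m → ℝ) (hw0 : ∀ j, 0 ≤ w j) (hw1 : ∑ j, w j = 1)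
    (hsd : d2 n₁ n₂ x f w = η ^ 2)
    (hattain : ∃ p₀ q₀ : Polynomial ℂ, p₀.natDegree ≤ n₁ ∧ q₀.natDegree ≤ n₂ ∧
      (∑ j, w j * ‖q₀.eval (x j)‖ ^ 2) = 1 ∧
      (∑ j, w j * ‖f j * q₀.eval (x j) - p₀.eval (x j)‖ ^ 2) =
        d2 n₁ n₂ x f w) :
    (∀ p q : Polynomial ℂ, p.natDegree ≤ n₁ → q.natDegree ≤ n₂ →
      0 ≤ (∑ j, w j * ‖f j * q.eval (x j) - p.eval (x j)‖ ^ 2) -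
        η ^ 2 * ∑ j, w j * ‖q.eval (x j)‖ ^ 2) ∧
    ∀ j, ‖f j - pstar.eval (x j) / qstar.eval (x j)‖ ≠ η → w j = 0 :=
  stmt14_general n₁ n₂ x f pstar qstar hp hq hq0 η hub w hw0 hsd
end
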